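/- Let b, b₃ > 0 and for h in the interval (h*, ∞), with h* > 0, define b₁(h) = A h, b₂(h) = B h (A, B > 0 fixed), and assume A h > b₃ for h > h*. Then the unique positive fixed point λ(h) of F_h(x) = b₁(h)·exp(−b x²)/(1 + b₂(h)·erf(√b·x)) − b₃·exp(−x²)/erfc(x) is a strictly increasing function of h on (h*, ∞), and λ(h) → 0 as h → h*⁺ when A h* = b₃. -/

import Mathlib

open Real Filter Topology Set

noncomputable def erf (x : ℝ) : ℝ := (2 / Real.sqrt Real.pi) * ∫ u in (0:ℝ)..x, Real.exp (-u^2)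

noncomputable def erfc (x : ℝ) : ℝ := 1 - erf x

open MeasureTheory in
lemma gauss_integrableOn (z : ℝ) :
    IntegrableOn (fun u : ℝ => Real.exp (-u^2)) (Set.Ioi z) := by
  have : Integrable (fun u : ℝ => Real.exp (-1 * u^2)) := integrable_exp_neg_mul_sq one_pos
  simpa using this.integrableOn

lemma gauss_intervalIntegrable (a c : ℝ) :
    IntervalIntegrable (fun u : ℝ => Real.exp (-u^2)) MeasureTheory.volume a c :=
  (Real.continuous_exp.comp (by continuity)).intervalIntegrable a c

open MeasureTheory in
lemma gauss_Ioi_pos (z : ℝ) : 0 < ∫ u in Set.Ioi z, Real.exp (-u^2) := by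
  rw [setIntegral_pos_iff_support_of_nonneg_ae
      (Filter.Eventually.of_forall fun u => (Real.exp_pos _).le) (gauss_integrableOn z)]
  have hs : Function.support (fun u : ℝ => Real.exp (-u^2)) = Set.univ := by
    ext u; simp [Real.exp_ne_zero]
  rw [hs, Set.univ_inter, Real.volume_Ioi]
  exact ENNReal.zero_lt_top

lemma coef_pos : 0 < 2 / Real.sqrt Real.pi := by positivity

lemma erf_nonneg' {x : ℝ} (hx : 0 ≤ x) : 0 ≤ erf x :=
  mul_nonneg coef_pos.le
    (intervalIntegral.integral_nonneg hx fun u _ => (Real.exp_pos _).le)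

lemma erf_mono' {x y : ℝ} (hxy : x ≤ y) : erf x ≤ erf y := by
  have hsplit : (∫ u in (0:ℝ)..y, Real.exp (-u^2))
      = (∫ u in (0:ℝ)..x, Real.exp (-u^2)) + ∫ u in x..y, Real.exp (-u^2) :=
    (intervalIntegral.integral_add_adjacent_intervals
      (gauss_intervalIntegrable 0 x) (gauss_intervalIntegrable x y)).symm
  have hnn : 0 ≤ ∫ u in x..y, Real.exp (-u^2) :=
    intervalIntegral.integral_nonneg hxy fun u _ => (Real.exp_pos _).le
  unfold erf
  rw [hsplit]
  nlinarith [coef_pos]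

open MeasureTheory in
lemma erfc_eq {z : ℝ} (hz : 0 ≤ z) :
    erfc z = (2 / Real.sqrt Real.pi) * ∫ u in Set.Ioi z, Real.exp (-u^2) := by
  have hIoi0 : (∫ u in Set.Ioi (0:ℝ), Real.exp (-u^2)) = Real.sqrt Real.pi / 2 := by
    have := integral_gaussian_Ioi 1
    simpa using this
  have hsplit : (∫ u in Set.Ioc (0:ℝ) z, Real.exp (-u^2)) + ∫ u in Set.Ioi z, Real.exp (-u^2)
      = ∫ u in Set.Ioi (0:ℝ), Real.exp (-u^2) := by
    rw [← Set.Ioc_union_Ioi_eq_Ioi hz]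
    refine (setIntegral_union ?_ measurableSet_Ioi ?_ ?_).symm
    · rw [Set.disjoint_left]; intro a ha hb; exact absurd ha.2 (not_le.mpr hb)
    · exact (gauss_integrableOn 0).mono_set Set.Ioc_subset_Ioi_self
    · exact gauss_integrableOn z
  have hival : (∫ u in (0:ℝ)..z, Real.exp (-u^2)) = ∫ u in Set.Ioc (0:ℝ) z, Real.exp (-u^2) :=
    intervalIntegral.integral_of_le hz
  have hsp : Real.sqrt Real.pi > 0 := Real.sqrt_pos.mpr Real.pi_pos
  unfold erfc erf
  rw [hival]
  have : (2 / Real.sqrt Real.pi) * (Real.sqrt Real.pi / 2) = 1 := by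
    field_simp
  nlinarith [hsplit, hIoi0]

lemma erfc_pos' {z : ℝ} (hz : 0 ≤ z) : 0 < erfc z := by
  rw [erfc_eq hz]
  exact mul_pos coef_pos (gauss_Ioi_pos z)

open MeasureTheory in
set_option maxHeartbeats 1000000 in
lemma mills_aux {x y : ℝ} (hx : 0 ≤ x) (hxy : x ≤ y) :
    Real.exp (-x^2) * ∫ u in Set.Ioi y, Real.exp (-u^2)
      ≤ Real.exp (-y^2) * ∫ u in Set.Ioi x, Real.exp (-u^2) := by
  have hg : Integrable (fun u : ℝ => Real.exp (-u^2)) := by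
    have := integrable_exp_neg_mul_sq (b := 1) one_pos
    simpa using this
  set d : ℝ := y - x with hd
  have hd0 : 0 ≤ d := sub_nonneg.mpr hxy
  have hmp : MeasurePreserving (fun v : ℝ => v + d) volume volume :=
    measurePreserving_add_right volume d
  have hemb : MeasurableEmbedding (fun v : ℝ => v + d) :=
    (MeasurableEquiv.addRight d).measurableEmbedding
  have key : (∫ u in Set.Ioi y, Real.exp (-u^2))
      = ∫ v in Set.Ioi x, Real.exp (-(v + d)^2) := by
    have h1 := hmp.setIntegral_preimage_emb hemb (fun u => Real.exp (-u^2)) (Set.Ioi y)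
    have h2 : (fun v : ℝ => v + d) ⁻¹' Set.Ioi y = Set.Ioi x := by
      ext v
      simp only [Set.mem_preimage, Set.mem_Ioi, hd]
      constructor <;> intro <;> linarith
    rw [h2] at h1
    exact h1.symm
  have hint2 : Integrable (fun v : ℝ => Real.exp (-(v + d)^2)) := by
    have : Integrable ((fun u : ℝ => Real.exp (-u^2)) ∘ fun v : ℝ => v + d) :=
      (hmp.integrable_comp_emb hemb).mpr hg
    exact this
  rw [key, ← integral_const_mul, ← integral_const_mul]
  have hmain : (∫ v in Set.Ioi x, Real.exp (-x^2) * Real.exp (-(v + d)^2))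
      ≤ ∫ v in Set.Ioi x, Real.exp (-y^2) * Real.exp (-v^2) := by
    apply setIntegral_mono_on ((hint2.const_mul _).integrableOn)
      ((hg.const_mul _).integrableOn) measurableSet_Ioi
    intro v hv
    rw [← Real.exp_add, ← Real.exp_add]
    apply Real.exp_le_exp.mpr
    have hxv : x ≤ v := (Set.mem_Ioi.mp hv).le
    have hyd : y = x + d := by simp [hd]
    nlinarith [mul_le_mul_of_nonneg_right hxv hd0]
  exact hmain

lemma ratio_mono {x y : ℝ} (hx : 0 ≤ x) (hxy : x ≤ y) :
    Real.exp (-x^2) / erfc x ≤ Real.exp (-y^2) / erfc y := by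
  have hy : 0 ≤ y := hx.trans hxy
  rw [div_le_div_iff₀ (erfc_pos' hx) (erfc_pos' hy), erfc_eq hx, erfc_eq hy]
  have h := mul_le_mul_of_nonneg_left (mills_aux hx hxy) coef_pos.le
  nlinarith [h]

theorem lambda_strictMono_in_h (b b3 A B hstar : ℝ)
    (hb : 0 < b) (hb3 : 0 < b3) (hA : 0 < A) (hB : 0 < B) (hhs : 0 < hstar)
    (hgt : ∀ h : ℝ, hstar < h → b3 < A * h)
    (lam : ℝ → ℝ)
    (hfix : ∀ h : ℝ, hstar < h → 0 < lam h ∧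
      A * h * Real.exp (-(b * (lam h)^2)) / (1 + B * h * erf (Real.sqrt b * lam h))
        - b3 * (Real.exp (-(lam h)^2) / erfc (lam h)) = lam h) :
    StrictMonoOn lam (Set.Ioi hstar) ∧
    (A * hstar = b3 → Tendsto lam (nhdsWithin hstar (Set.Ioi hstar)) (nhds 0)) := by
  have erf0 : erf 0 = 0 := by simp [erf]
  have erfc0 : erfc 0 = 1 := by simp [erfc, erf0]
  set F : ℝ → ℝ → ℝ := fun h x =>
    A * h * Real.exp (-(b * x^2)) / (1 + B * h * erf (Real.sqrt b * x))
      - b3 * (Real.exp (-x^2) / erfc x) with hF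
  have hfixF : ∀ h : ℝ, hstar < h → F h (lam h) = lam h := fun h hh => (hfix h hh).2
  have hEnn : ∀ x : ℝ, 0 ≤ x → 0 ≤ erf (Real.sqrt b * x) := fun x hx =>
    erf_nonneg' (mul_nonneg (Real.sqrt_nonneg b) hx)
  have hden : ∀ h x : ℝ, 0 < h → 0 ≤ x → 0 < 1 + B * h * erf (Real.sqrt b * x) := by
    intro h x hh hx
    have := mul_nonneg (mul_nonneg hB.le hh.le) (hEnn x hx)
    linarith
  -- antitone in x
  have hanti : ∀ h : ℝ, 0 < h → ∀ x y : ℝ, 0 ≤ x → x ≤ y → F h y ≤ F h x := by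
    intro h hh x y hx hxy
    have hy : 0 ≤ y := hx.trans hxy
    have h1 : A * h * Real.exp (-(b * y^2)) / (1 + B * h * erf (Real.sqrt b * y))
        ≤ A * h * Real.exp (-(b * x^2)) / (1 + B * h * erf (Real.sqrt b * x)) := by
      apply div_le_div₀ (by positivity) ?_ (hden h x hh hx) ?_
      · refine mul_le_mul_of_nonneg_left (Real.exp_le_exp.mpr ?_) (by positivity)
        have hsq : x^2 ≤ y^2 := by nlinarith
        nlinarith [mul_le_mul_of_nonneg_left hsq hb.le]
      · have h0 := erf_mono' (mul_le_mul_of_nonneg_left hxy (Real.sqrt_nonneg b))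
        have := mul_le_mul_of_nonneg_left h0 (mul_pos hB hh).le
        linarith
    have h2 := mul_le_mul_of_nonneg_left (ratio_mono hx hxy) hb3.le
    simp only [hF]
    linarith
  -- strictly increasing in h
  have hmono : ∀ h1 h2 x : ℝ, hstar < h1 → h1 < h2 → 0 ≤ x → F h1 x < F h2 x := by
    intro h1 h2 x hh1 h12 hx
    have hp1 : 0 < h1 := hhs.trans hh1
    have hp2 : 0 < h2 := hp1.trans h12
    have hd1 := hden h1 x hp1 hx
    have hd2 := hden h2 x hp2 hx
    have he : 0 < Real.exp (-(b * x^2)) := Real.exp_pos _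
    have hE := hEnn x hx
    have key : A * h1 * Real.exp (-(b * x^2)) / (1 + B * h1 * erf (Real.sqrt b * x))
        < A * h2 * Real.exp (-(b * x^2)) / (1 + B * h2 * erf (Real.sqrt b * x)) := by
      rw [div_lt_div_iff₀ hd1 hd2]
      nlinarith [mul_pos (mul_pos hA (sub_pos.mpr h12)) he,
        mul_nonneg (mul_nonneg (mul_nonneg hB.le (mul_pos hp1 hp2).le) hE) he.le]
    simp only [hF]
    linarith
  constructor
  · intro h1 hh1 h2 hh2 h12
    simp only [Set.mem_Ioi] at hh1 hh2
    obtain ⟨x1pos, -⟩ := hfix h1 hh1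
    obtain ⟨x2pos, -⟩ := hfix h2 hh2
    by_contra hle
    push_neg at hle
    have c1 : lam h1 = F h1 (lam h1) := (hfixF h1 hh1).symm
    have c2 : F h1 (lam h1) ≤ F h1 (lam h2) :=
      hanti h1 (hhs.trans hh1) (lam h2) (lam h1) x2pos.le hle
    have c3 : F h1 (lam h2) < F h2 (lam h2) := hmono h1 h2 (lam h2) hh1 h12 x2pos.le
    have c4 : F h2 (lam h2) = lam h2 := hfixF h2 hh2
    linarith
  · intro heq
    have key : ∀ h : ℝ, hstar < h → lam h ≤ A * (h - hstar) := by
      intro h hh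
      obtain ⟨xpos, -⟩ := hfix h hh
      have hp : 0 < h := hhs.trans hh
      have h1 : lam h = F h (lam h) := (hfixF h hh).symm
      have h2 : F h (lam h) ≤ F h 0 := hanti h hp 0 (lam h) le_rfl xpos.le
      have h3 : F h 0 = A * h - b3 := by
        simp [hF, erf0, erfc0]
      have : lam h ≤ A * h - b3 := by linarith
      rw [← heq] at this
      linarith [this]
    have hup : Tendsto (fun h : ℝ => A * (h - hstar)) (nhdsWithin hstar (Set.Ioi hstar)) (nhds 0) := by
      have : Tendsto (fun h : ℝ => A * (h - hstar)) (nhds hstar) (nhds (A * (hstar - hstar))) :=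
        (continuous_const.mul (continuous_id.sub continuous_const)).tendsto hstar
      simpa using this.mono_left nhdsWithin_le_nhds
    refine tendsto_of_tendsto_of_tendsto_of_le_of_le' tendsto_const_nhds hup ?_ ?_
    · exact Filter.eventually_of_mem self_mem_nhdsWithin fun h hh => (hfix h hh).1.le
    · exact Filter.eventually_of_mem self_mem_nhdsWithin fun h hh => key h hh
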